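/- In any semigroup S, the relations H and ∼ₙ commute: H ∘ ∼ₙ = ∼ₙ ∘ H (as composites of binary relations). -/

import Mathlib

/-- Natural conjugacy on a semigroup `S`. -/
def nconj {S : Type*} [Semigroup S] (a b : S) : Prop :=
  ∃ g h : WithOne S, (a : WithOne S) * g = g * b ∧ (b : WithOne S) * h = h * a ∧
    h * a * g = (b : WithOne S) ∧ g * b * h = (a : WithOne S)

/-- Green's H relation on `S`. -/
def greenH {S : Type*} [Semigroup S] (a b : S) : Prop :=
  (Set.range (fun s : WithOne S => s * a) = Set.range (fun s : WithOne S => s * b)) ∧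
  (Set.range (fun s : WithOne S => (a : WithOne S) * s) =
    Set.range (fun s : WithOne S => (b : WithOne S) * s))

/-!
If `c ∼ₙ b` via `g, h`, then `e = g h` is a two-sided identity for `c`, hence for every `a` that is
H-related to `c`. On the elements fixed by `e`, the map `x ↦ h x g` is multiplicative enough to
transport H, and `a ∼ₙ h a g` via the same `g, h`. So `a H c ∼ₙ b` gives `a ∼ₙ h a g H h c g = b`;
the other inclusion follows by symmetry of both relations.
-/

section Monoid

variable {M : Type*} [Monoid M]

theorem range_mul_const_eq_iff {x y : M} :
    Set.range (· * x) = Set.range (· * y) ↔ (∃ u, u * y = x) ∧ ∃ u, u * x = y := by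
  refine ⟨fun h => ⟨?_, ?_⟩, fun ⟨⟨u, hu⟩, ⟨v, hv⟩⟩ => ?_⟩
  · show x ∈ Set.range (· * y)
    exact h ▸ ⟨1, one_mul x⟩
  · show y ∈ Set.range (· * x)
    exact h.symm ▸ ⟨1, one_mul y⟩
  · ext z
    constructor <;> rintro ⟨s, rfl⟩
    · exact ⟨s * u, by simp only [← hu, mul_assoc]⟩
    · exact ⟨s * v, by simp only [← hv, mul_assoc]⟩

theorem range_const_mul_eq_iff {x y : M} :
    Set.range (x * ·) = Set.range (y * ·) ↔ y ∣ x ∧ x ∣ y := by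
  refine ⟨fun h => ⟨?_, ?_⟩, fun ⟨⟨u, hu⟩, ⟨v, hv⟩⟩ => ?_⟩
  · obtain ⟨u, hu⟩ : x ∈ Set.range (y * ·) := h ▸ ⟨1, mul_one x⟩
    exact ⟨u, hu.symm⟩
  · obtain ⟨u, hu⟩ : y ∈ Set.range (x * ·) := h.symm ▸ ⟨1, mul_one y⟩
    exact ⟨u, hu.symm⟩
  · ext z
    constructor <;> rintro ⟨s, rfl⟩
    · exact ⟨u * s, by simp only [hu, mul_assoc]⟩
    · exact ⟨v * s, by simp only [hv, mul_assoc]⟩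

variable {g h b c x y : M}

theorem mul_mul_eq_self_of_intertwining (hcg : c * g = g * b) (hbh : b * h = h * c)
    (hgbh : g * b * h = c) : g * h * c = c ∧ c * (g * h) = c :=
  ⟨by rw [mul_assoc, ← hbh, ← mul_assoc, hgbh], by rw [← mul_assoc, hcg, hgbh]⟩

theorem mul_eq_self_of_dvd {e : M} (hy : e * y = y) (hyx : y ∣ x) : e * x = x := by
  obtain ⟨u, rfl⟩ := hyx
  rw [← mul_assoc, hy]

theorem mul_eq_self_of_left_dvd {e : M} (hy : y * e = y) (hyx : ∃ u, u * y = x) : x * e = x := by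
  obtain ⟨u, rfl⟩ := hyx
  rw [mul_assoc, hy]

theorem exists_mul_conj_eq_conj (hy : g * h * y = y) (hyx : ∃ u, u * y = x) :
    ∃ u, u * (h * y * g) = h * x * g := by
  obtain ⟨u, rfl⟩ := hyx
  refine ⟨h * u * g, ?_⟩
  rw [show h * u * g * (h * y * g) = h * u * (g * h * y) * g by simp only [mul_assoc], hy]
  simp only [mul_assoc]

theorem conj_dvd_conj (hy : y * (g * h) = y) (hyx : y ∣ x) : h * y * g ∣ h * x * g := by
  obtain ⟨u, rfl⟩ := hyx
  refine ⟨h * u * g, ?_⟩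
  rw [show h * y * g * (h * u * g) = h * (y * (g * h)) * u * g by simp only [mul_assoc], hy]
  simp only [mul_assoc]

end Monoid

section Semigroup

variable {S : Type*} [Semigroup S]

theorem exists_coe_eq_mul_coe_mul (x y : WithOne S) (a : S) :
    ∃ d : S, (d : WithOne S) = x * a * y := by
  induction x using WithOne.recOneCoe with
  | one => induction y using WithOne.recOneCoe with
    | one => exact ⟨a, by simp⟩
    | coe t => exact ⟨a * t, by simp⟩
  | coe s => induction y using WithOne.recOneCoe with
    | one => exact ⟨s * a, by simp⟩
    | coe t => exact ⟨s * a * t, by simp⟩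

theorem greenH_iff {a b : S} :
    greenH a b ↔ ((∃ u : WithOne S, u * b = a) ∧ ∃ u : WithOne S, u * a = b) ∧
      ((b : WithOne S) ∣ a ∧ (a : WithOne S) ∣ b) :=
  and_congr range_mul_const_eq_iff range_const_mul_eq_iff

theorem greenH.symm {a b : S} (hab : greenH a b) : greenH b a :=
  ⟨hab.1.symm, hab.2.symm⟩

theorem nconj.symm {a b : S} (hab : nconj a b) : nconj b a := by
  obtain ⟨g, h, h₁, h₂, h₃, h₄⟩ := hab
  exact ⟨h, g, h₂, h₁, h₄, h₃⟩

theorem nconj_of_mul_mul_eq_self {a d : S} {g h : WithOne S} (hd : (d : WithOne S) = h * a * g)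
    (hl : g * h * a = a) (hr : a * (g * h) = a) : nconj a d := by
  refine ⟨g, h, ?_, ?_, hd.symm, ?_⟩ <;> rw [hd]
  · rw [show g * (h * a * g) = g * h * a * g by simp only [mul_assoc], hl]
  · rw [show h * a * g * h = h * (a * (g * h)) by simp only [mul_assoc], hr]
  · rw [show g * (h * a * g) * h = g * h * a * (g * h) by simp only [mul_assoc], hl, hr]

theorem exists_nconj_greenH_of_greenH_nconj {a b c : S} (hH : greenH a c) (hcb : nconj c b) :
    ∃ d : S, nconj a d ∧ greenH d b := by
  obtain ⟨g, h, hcg, hbh, hhcg, hgbh⟩ := hcb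
  obtain ⟨⟨hca, hac⟩, hc_dvd_a, ha_dvd_c⟩ := greenH_iff.1 hH
  obtain ⟨hcl, hcr⟩ := mul_mul_eq_self_of_intertwining hcg hbh hgbh
  have hal := mul_eq_self_of_dvd hcl hc_dvd_a
  have har := mul_eq_self_of_left_dvd hcr hca
  obtain ⟨d, hd⟩ := exists_coe_eq_mul_coe_mul h g a
  refine ⟨d, nconj_of_mul_mul_eq_self hd hal har, greenH_iff.2 ?_⟩
  rw [hd, ← hhcg]
  exact ⟨⟨exists_mul_conj_eq_conj hcl hca, exists_mul_conj_eq_conj hal hac⟩,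
    conj_dvd_conj hcr hc_dvd_a, conj_dvd_conj har ha_dvd_c⟩

end Semigroup

theorem H_comp_nconj_eq_nconj_comp_H {S : Type*} [Semigroup S] (a b : S) :
    (∃ c : S, greenH a c ∧ nconj c b) ↔ (∃ c : S, nconj a c ∧ greenH c b) := by
  constructor
  · rintro ⟨c, hac, hcb⟩
    exact exists_nconj_greenH_of_greenH_nconj hac hcb
  · rintro ⟨c, hac, hcb⟩
    obtain ⟨d, hbd, hda⟩ := exists_nconj_greenH_of_greenH_nconj hcb.symm hac.symm
    exact ⟨d, hda.symm, hbd.symm⟩
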